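/- arXiv:2107.11440 — 3 statements merged into one kernel-verified Lean document; each statement's English description precedes it below -/
import Mathlib

section
/- (Transient probabilities, general gain-loss-duplication case) For independent random variables ζ₀ ~ Pólya(κ, q) and ζ₁,…,ζₙ iid with P{ζᵢ=0} = p, P{ζᵢ=k} = (1-p)(1-q)q^{k-1} for k ≥ 1, the distribution of the sum is P{ζ₀ + ζ₁ + ⋯ + ζₙ = m} = ∑_{s=0}^{min(n,m)} C(κ+m-1, m-s)(1-q)^{κ+s} q^{m-s} · C(n,s) p^{n-s} (1-p)^s. -/
/-- Generalized binomial coefficient `C(θ, k) = θ(θ-1)⋯(θ-k+1)/k!`. -/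
noncomputable def gbc (θ : ℝ) (k : ℕ) : ℝ :=
  (∏ i ∈ Finset.range k, (θ - i)) / (Nat.factorial k)

/-- Point mass of the Pólya (negative binomial) distribution with
parameters `(κ, q)`. -/
noncomputable def polyaMass (κ q : ℝ) (k : ℕ) : ℝ :=
  gbc (κ + k - 1) k * (1 - q) ^ κ * q ^ k

/-- Point mass of the single-copy descendant distribution:
`P{ζᵢ = 0} = p` and `P{ζᵢ = k} = (1-p)(1-q)q^{k-1}` for `k ≥ 1`. -/
noncomputable def copyMass (p q : ℝ) (k : ℕ) : ℝ :=
  if k = 0 then p else (1 - p) * (1 - q) * q ^ (k - 1)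

open Finset

lemma descPoch_smeval_prod (θ : ℝ) (k : ℕ) :
    (descPochhammer ℤ k).smeval θ = ∏ i ∈ range k, (θ - i) := by
  induction k with
  | zero => simp [descPochhammer_zero, Polynomial.smeval_one]
  | succ k ih =>
    rw [descPochhammer_succ_right, Polynomial.smeval_mul, ih, prod_range_succ,
      Polynomial.smeval_sub, Polynomial.smeval_X, Polynomial.smeval_natCast]
    ring

lemma gbc_eq_choose (θ : ℝ) (k : ℕ) : gbc θ k = Ring.choose θ k := by
  have h := Ring.descPochhammer_eq_factorial_smul_choose (R := ℝ) θ k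
  rw [descPoch_smeval_prod] at h
  have hk : (k.factorial : ℝ) ≠ 0 := by exact_mod_cast Nat.factorial_ne_zero k
  rw [gbc, h, nsmul_eq_mul, mul_div_cancel_left₀ _ hk]

lemma gbc_zero (θ : ℝ) : gbc θ 0 = 1 := by simp [gbc]

lemma gbc_shift (θ : ℝ) (k : ℕ) : gbc (θ + k - 1) k = (-1) ^ k * gbc (-θ) k := by
  unfold gbc
  have h1 : ∏ i ∈ range k, (θ + k - 1 - i) = ∏ j ∈ range k, (θ + j) := by
    rw [← Finset.prod_range_reflect (fun j => θ + j) k]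
    refine prod_congr rfl fun i hi => ?_
    have hik : i < k := mem_range.mp hi
    have : ((k - 1 - i : ℕ) : ℝ) = (k : ℝ) - 1 - i := by
      push_cast [Nat.cast_sub (by omega : i ≤ k - 1), Nat.cast_sub (by omega : 1 ≤ k)]
      ring
    rw [this]; ring
  have h2 : ∏ i ∈ range k, (-θ - i) = (-1) ^ k * ∏ j ∈ range k, (θ + j) := by
    rw [prod_congr rfl fun i (_ : i ∈ range k) => (by ring : -θ - (i : ℝ) = -1 * (θ + i)),
      prod_mul_distrib, prod_const, card_range]
  rw [h1, h2, mul_div_assoc, ← mul_assoc, ← mul_pow]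
  norm_num

lemma gbc_vand (x y : ℝ) (N : ℕ) :
    ∑ ij ∈ antidiagonal N, gbc (x + ij.1 - 1) ij.1 * gbc (y + ij.2 - 1) ij.2
      = gbc (x + y + N - 1) N := by
  have key : ∀ ij ∈ antidiagonal N, gbc (x + ij.1 - 1) ij.1 * gbc (y + ij.2 - 1) ij.2
      = (-1 : ℝ) ^ N * (Ring.choose (-x) ij.1 * Ring.choose (-y) ij.2) := by
    intro ij hij
    have h : ij.1 + ij.2 = N := Finset.HasAntidiagonal.mem_antidiagonal.mp hij
    rw [gbc_shift x, gbc_shift y, gbc_eq_choose, gbc_eq_choose, ← h, pow_add]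
    ring
  rw [sum_congr rfl key, ← mul_sum, ← Ring.add_choose_eq N (Commute.all _ _),
    gbc_shift (x + y), gbc_eq_choose, neg_add]

lemma sum_antidiagonalTuple_succ {M : Type*} [AddCommMonoid M] (k n : ℕ)
    (F : (Fin (k + 1) → ℕ) → M) :
    ∑ f ∈ Finset.Nat.antidiagonalTuple (k + 1) n, F f
      = ∑ ij ∈ antidiagonal n, ∑ g ∈ Finset.Nat.antidiagonalTuple k ij.2,
          F (Fin.cons ij.1 g) := by
  rw [sum_sigma']
  refine Finset.sum_nbij' (fun f => ⟨(f 0, ∑ i : Fin k, f i.succ), Fin.tail f⟩)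
    (fun x => Fin.cons x.1.1 x.2) ?_ ?_ ?_ ?_ ?_
  · intro f hf
    rw [Finset.Nat.mem_antidiagonalTuple] at hf
    rw [mem_sigma, HasAntidiagonal.mem_antidiagonal]
    refine ⟨?_, ?_⟩
    · rw [← hf, Fin.sum_univ_succ]
    · rw [Finset.Nat.mem_antidiagonalTuple]
      rfl
  · rintro ⟨⟨a, b⟩, g⟩ hx
    rw [mem_sigma, HasAntidiagonal.mem_antidiagonal] at hx
    have h2 := Finset.Nat.mem_antidiagonalTuple.mp hx.2
    rw [Finset.Nat.mem_antidiagonalTuple, Fin.sum_univ_succ]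
    simp only [Fin.cons_zero, Fin.cons_succ]
    rw [h2]
    exact hx.1
  · intro f _
    exact Fin.cons_self_tail f
  · rintro ⟨⟨a, b⟩, g⟩ hx
    rw [mem_sigma, HasAntidiagonal.mem_antidiagonal] at hx
    have h2 := Finset.Nat.mem_antidiagonalTuple.mp hx.2
    simp only [Fin.cons_zero, Fin.tail_cons, Fin.cons_succ]
    congr 1
    rw [h2]
  · intro f _
    rw [Fin.cons_self_tail]

lemma conv_shift (u v : ℕ) (A B : ℕ → ℝ) (j : ℕ) :
    ∑ ij ∈ antidiagonal j,
        (if u ≤ ij.1 then A (ij.1 - u) else 0) * (if v ≤ ij.2 then B (ij.2 - v) else 0)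
      = if u + v ≤ j then ∑ ab ∈ antidiagonal (j - (u + v)), A ab.1 * B ab.2 else 0 := by
  by_cases huv : u + v ≤ j
  · rw [if_pos huv]
    rw [← Finset.sum_filter_add_sum_filter_not (antidiagonal j)
      (fun ij => u ≤ ij.1 ∧ v ≤ ij.2)]
    have h2 : ∑ ij ∈ (antidiagonal j).filter (fun ij => ¬(u ≤ ij.1 ∧ v ≤ ij.2)),
        (if u ≤ ij.1 then A (ij.1 - u) else 0) * (if v ≤ ij.2 then B (ij.2 - v) else 0) = 0 := by
      refine Finset.sum_eq_zero fun ij hij => ?_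
      rw [mem_filter] at hij
      rcases not_and_or.mp hij.2 with h | h
      · rw [if_neg h, zero_mul]
      · rw [if_neg h, mul_zero]
    rw [h2, add_zero]
    refine Finset.sum_nbij' (fun ij => (ij.1 - u, ij.2 - v)) (fun ab => (ab.1 + u, ab.2 + v))
      ?_ ?_ ?_ ?_ ?_
    · rintro ⟨a, b⟩ hab
      rw [mem_filter, HasAntidiagonal.mem_antidiagonal] at hab
      dsimp only
      rw [HasAntidiagonal.mem_antidiagonal]
      omega
    · rintro ⟨a, b⟩ hab
      rw [HasAntidiagonal.mem_antidiagonal] at hab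
      dsimp only
      rw [mem_filter, HasAntidiagonal.mem_antidiagonal]
      omega
    · rintro ⟨a, b⟩ hab
      rw [mem_filter, HasAntidiagonal.mem_antidiagonal] at hab
      simp only [Prod.mk.injEq]
      omega
    · rintro ⟨a, b⟩ _
      simp
    · rintro ⟨a, b⟩ hab
      rw [mem_filter] at hab
      rw [if_pos hab.2.1, if_pos hab.2.2]
  · rw [if_neg huv]
    refine Finset.sum_eq_zero fun ij hij => ?_
    rw [HasAntidiagonal.mem_antidiagonal] at hij
    by_cases h1 : u ≤ ij.1
    · have : ¬ v ≤ ij.2 := by omega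
      rw [if_neg this, mul_zero]
    · rw [if_neg h1, zero_mul]

lemma prod_range_sub_eq_factorial (c : ℕ) : ∏ i ∈ range c, (c - i) = c.factorial := by
  induction c with
  | zero => simp
  | succ c ih =>
    rw [Finset.prod_range_succ' (fun i => c + 1 - i) c]
    simp only [Nat.succ_sub_succ]
    rw [ih, Nat.factorial_succ, Nat.sub_zero, mul_comm]

lemma gbc_self (c : ℕ) : gbc (c : ℝ) c = 1 := by
  rw [gbc]
  have h : ∏ i ∈ range c, ((c : ℝ) - i) = (c.factorial : ℝ) := by
    rw [← prod_range_sub_eq_factorial c, Nat.cast_prod]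
    exact prod_congr rfl fun i hi => by
      rw [Nat.cast_sub (le_of_lt (mem_range.mp hi))]
  rw [h, div_self (by exact_mod_cast c.factorial_ne_zero)]

lemma gbc_pred (j : ℕ) : gbc ((j : ℝ) - 1) j = if j = 0 then 1 else 0 := by
  cases j with
  | zero => simp [gbc]
  | succ k =>
    rw [if_neg (Nat.succ_ne_zero k), gbc]
    have h : ∏ i ∈ range (k + 1), (((k + 1 : ℕ) : ℝ) - 1 - i) = 0 :=
      Finset.prod_eq_zero (mem_range.mpr (Nat.lt_succ_self k)) (by push_cast; ring)
    rw [h, zero_div]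

noncomputable def nbAux (q : ℝ) (s c : ℕ) : ℝ := gbc ((s : ℝ) + c - 1) c * (1 - q) ^ s * q ^ c

noncomputable def nb (q : ℝ) (s j : ℕ) : ℝ := if s ≤ j then nbAux q s (j - s) else 0

noncomputable def copySum (p q : ℝ) (n j : ℕ) : ℝ :=
  ∑ f ∈ Finset.Nat.antidiagonalTuple n j, ∏ i : Fin n, copyMass p q (f i)

lemma nbAux_conv (q : ℝ) (u v N : ℕ) :
    ∑ ab ∈ antidiagonal N, nbAux q u ab.1 * nbAux q v ab.2 = nbAux q (u + v) N := by
  have h : ∀ ab ∈ antidiagonal N, nbAux q u ab.1 * nbAux q v ab.2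
      = (gbc ((u : ℝ) + ab.1 - 1) ab.1 * gbc ((v : ℝ) + ab.2 - 1) ab.2)
        * ((1 - q) ^ (u + v) * q ^ N) := by
    intro ab hab
    have h := Finset.HasAntidiagonal.mem_antidiagonal.mp hab
    rw [nbAux, nbAux, ← h, pow_add, pow_add]
    ring
  rw [sum_congr rfl h, ← sum_mul, gbc_vand, nbAux]
  have h2 : (u : ℝ) + v + N - 1 = ((u + v : ℕ) : ℝ) + N - 1 := by push_cast; ring
  rw [h2]
  ring

lemma nb_conv (q : ℝ) (u v j : ℕ) :
    ∑ ij ∈ antidiagonal j, nb q u ij.1 * nb q v ij.2 = nb q (u + v) j := by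
  simp only [nb]
  rw [conv_shift]
  split_ifs with h
  · rw [nbAux_conv]
  · rfl

lemma nb_one (q : ℝ) (k : ℕ) : nb q 1 k = if k = 0 then 0 else (1 - q) * q ^ (k - 1) := by
  cases k with
  | zero => simp [nb]
  | succ k =>
    rw [nb, if_pos (by omega : 1 ≤ k + 1), nbAux, if_neg (Nat.succ_ne_zero k)]
    simp only [Nat.cast_one, Nat.add_sub_cancel]
    have h : (1 : ℝ) + (k : ℝ) - 1 = (k : ℝ) := by ring
    rw [h, gbc_self]
    simp

lemma nb_zero (q : ℝ) (j : ℕ) : nb q 0 j = if j = 0 then 1 else 0 := by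
  rw [nb, if_pos (Nat.zero_le _), Nat.sub_zero, nbAux]
  simp only [Nat.cast_zero]
  have h : (0 : ℝ) + (j : ℝ) - 1 = (j : ℝ) - 1 := by ring
  rw [h, gbc_pred]
  split_ifs with hj
  · subst hj; simp
  · simp

lemma copyMass_decomp (p q : ℝ) (k : ℕ) :
    copyMass p q k = (if k = 0 then p else 0) + (1 - p) * nb q 1 k := by
  rw [copyMass, nb_one]
  split_ifs with h
  · simp
  · ring

lemma delta_conv (c : ℝ) (G : ℕ → ℝ) (j : ℕ) :
    ∑ ij ∈ antidiagonal j, (if ij.1 = 0 then c else 0) * G ij.2 = c * G j := by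
  rw [Finset.sum_eq_single (0, j)]
  · simp
  · rintro ⟨a, b⟩ hab hne
    rw [HasAntidiagonal.mem_antidiagonal] at hab
    have ha : ¬ a = 0 := by
      rintro rfl
      exact hne (by simp [← hab])
    simp [ha]
  · intro h
    exact absurd (HasAntidiagonal.mem_antidiagonal.mpr (by simp)) h

lemma copySum_zero (p q : ℝ) (j : ℕ) : copySum p q 0 j = if j = 0 then 1 else 0 := by
  cases j with
  | zero => simp [copySum, Finset.Nat.antidiagonalTuple_zero_zero]
  | succ j => simp [copySum, Finset.Nat.antidiagonalTuple_zero_succ]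

lemma copySum_succ (p q : ℝ) (n j : ℕ) :
    copySum p q (n + 1) j
      = ∑ ij ∈ antidiagonal j, copyMass p q ij.1 * copySum p q n ij.2 := by
  rw [copySum, sum_antidiagonalTuple_succ]
  refine sum_congr rfl fun ij _ => ?_
  rw [copySum, mul_sum]
  refine sum_congr rfl fun g _ => ?_
  rw [Fin.prod_univ_succ]
  simp [Fin.cons_zero, Fin.cons_succ]

lemma copySum_eq (p q : ℝ) (n j : ℕ) :
    copySum p q n j
      = ∑ s ∈ range (n + 1), (n.choose s : ℝ) * p ^ (n - s) * (1 - p) ^ s * nb q s j := by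
  induction n generalizing j with
  | zero => simp [copySum_zero, nb_zero]
  | succ n ih =>
    have step : copySum p q (n + 1) j
        = p * copySum p q n j
          + (1 - p) * ∑ ij ∈ antidiagonal j, nb q 1 ij.1 * copySum p q n ij.2 := by
      rw [copySum_succ]
      have h : ∀ ij ∈ antidiagonal j, copyMass p q ij.1 * copySum p q n ij.2
          = (if ij.1 = 0 then p else 0) * copySum p q n ij.2
            + (1 - p) * (nb q 1 ij.1 * copySum p q n ij.2) := by
        intro ij _
        rw [copyMass_decomp]
        ring
      rw [sum_congr rfl h, sum_add_distrib, delta_conv, ← mul_sum]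
    have key : ∑ ij ∈ antidiagonal j, nb q 1 ij.1 * copySum p q n ij.2
        = ∑ s ∈ range (n + 1),
            (n.choose s : ℝ) * p ^ (n - s) * (1 - p) ^ s * nb q (s + 1) j := by
      have h1 : ∀ ij ∈ antidiagonal j, nb q 1 ij.1 * copySum p q n ij.2
          = ∑ s ∈ range (n + 1),
              (n.choose s : ℝ) * p ^ (n - s) * (1 - p) ^ s * (nb q 1 ij.1 * nb q s ij.2) := by
        intro ij _
        rw [ih, mul_sum]
        exact sum_congr rfl fun s _ => by ring
      rw [sum_congr rfl h1, sum_comm]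
      refine sum_congr rfl fun s _ => ?_
      rw [← mul_sum, nb_conv, Nat.add_comm 1 s]
    rw [step, key, ih, Finset.mul_sum, Finset.mul_sum]
    conv_rhs => rw [Finset.sum_range_succ']
    have expand : ∀ s ∈ range (n + 1),
        (((n + 1).choose (s + 1) : ℝ)) * p ^ (n + 1 - (s + 1)) * (1 - p) ^ (s + 1) * nb q (s + 1) j
          = (n.choose s : ℝ) * p ^ (n - s) * (1 - p) ^ (s + 1) * nb q (s + 1) j
            + (n.choose (s + 1) : ℝ) * p ^ (n - s) * (1 - p) ^ (s + 1) * nb q (s + 1) j := by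
      intro s _
      rw [Nat.choose_succ_succ, show n + 1 - (s + 1) = n - s from by omega]
      push_cast
      ring
    rw [sum_congr rfl expand, sum_add_distrib]
    have hA : ∑ s ∈ range (n + 1), p * ((n.choose s : ℝ) * p ^ (n - s) * (1 - p) ^ s * nb q s j)
        = (∑ s ∈ range (n + 1),
            (n.choose (s + 1) : ℝ) * p ^ (n - s) * (1 - p) ^ (s + 1) * nb q (s + 1) j)
          + ((n + 1).choose 0 : ℝ) * p ^ (n + 1 - 0) * (1 - p) ^ 0 * nb q 0 j := by
      rw [Finset.sum_range_succ
        (f := fun s => (n.choose (s + 1) : ℝ) * p ^ (n - s) * (1 - p) ^ (s + 1) * nb q (s + 1) j) n]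
      rw [Finset.sum_range_succ'
        (f := fun s => p * ((n.choose s : ℝ) * p ^ (n - s) * (1 - p) ^ s * nb q s j)) n]
      have hterm : ∀ s ∈ range n,
          p * ((n.choose (s + 1) : ℝ) * p ^ (n - (s + 1)) * (1 - p) ^ (s + 1) * nb q (s + 1) j)
            = (n.choose (s + 1) : ℝ) * p ^ (n - s) * (1 - p) ^ (s + 1) * nb q (s + 1) j := by
        intro s hs
        have hsn : s < n := mem_range.mp hs
        rw [show n - s = (n - (s + 1)) + 1 by omega, pow_succ]
        ring
      rw [sum_congr rfl hterm]
      simp [Nat.choose_succ_self, Nat.sub_zero, pow_succ]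
      ring
    have hB : ∑ s ∈ range (n + 1),
          (1 - p) * ((n.choose s : ℝ) * p ^ (n - s) * (1 - p) ^ s * nb q (s + 1) j)
        = ∑ s ∈ range (n + 1),
            (n.choose s : ℝ) * p ^ (n - s) * (1 - p) ^ (s + 1) * nb q (s + 1) j :=
      sum_congr rfl fun s _ => by ring
    rw [hA, hB]
    ring

/-- transient probabilities in the general
gain-loss-duplication case:
`P{ζ₀ + ζ₁ + ⋯ + ζₙ = m} = ∑_{s=0}^{min(n,m)} C(κ+m-1, m-s)(1-q)^{κ+s} q^{m-s}
· C(n,s) p^{n-s} (1-p)^s`. -/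
theorem stmt3 (p q κ : ℝ) (hp0 : 0 < p) (hp1 : p < 1) (hq0 : 0 < q) (hq1 : q < 1)
    (hκ : 0 < κ) (n m : ℕ) :
    ∑ f ∈ Finset.Nat.antidiagonalTuple (n + 1) m,
        polyaMass κ q (f 0) * ∏ i : Fin n, copyMass p q (f i.succ)
      = ∑ s ∈ Finset.range (min n m + 1),
          gbc (κ + m - 1) (m - s) * (1 - q) ^ (κ + s) * q ^ (m - s) *
            (Nat.choose n s) * p ^ (n - s) * (1 - p) ^ s := by
  have hq : (0 : ℝ) < 1 - q := by linarith
  have stepA : ∑ f ∈ Finset.Nat.antidiagonalTuple (n + 1) m,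
        polyaMass κ q (f 0) * ∏ i : Fin n, copyMass p q (f i.succ)
      = ∑ ij ∈ antidiagonal m, polyaMass κ q ij.1 * copySum p q n ij.2 := by
    rw [sum_antidiagonalTuple_succ]
    refine sum_congr rfl fun ij _ => ?_
    rw [copySum, mul_sum]
    refine sum_congr rfl fun g _ => ?_
    simp [Fin.cons_zero, Fin.cons_succ]
  rw [stepA]
  have expand : ∀ ij ∈ antidiagonal m, polyaMass κ q ij.1 * copySum p q n ij.2
      = ∑ s ∈ range (n + 1),
          (n.choose s : ℝ) * p ^ (n - s) * (1 - p) ^ s * (polyaMass κ q ij.1 * nb q s ij.2) := by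
    intro ij _
    rw [copySum_eq, mul_sum]
    exact sum_congr rfl fun s _ => by ring
  rw [sum_congr rfl expand, sum_comm]
  have polyaConv : ∀ s : ℕ, ∑ ij ∈ antidiagonal m, polyaMass κ q ij.1 * nb q s ij.2
      = if s ≤ m then
          gbc (κ + m - 1) (m - s) * (1 - q) ^ κ * (1 - q) ^ s * q ^ (m - s) else 0 := by
    intro s
    have h0 : ∀ ij ∈ antidiagonal m, polyaMass κ q ij.1 * nb q s ij.2
        = (if 0 ≤ ij.1 then polyaMass κ q (ij.1 - 0) else 0)
          * (if s ≤ ij.2 then nbAux q s (ij.2 - s) else 0) := by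
      intro ij _
      rw [if_pos (Nat.zero_le _), Nat.sub_zero, nb]
    rw [sum_congr rfl h0, conv_shift, zero_add]
    split_ifs with hs
    · have h1 : ∀ ab ∈ antidiagonal (m - s), polyaMass κ q ab.1 * nbAux q s ab.2
          = (gbc (κ + ab.1 - 1) ab.1 * gbc ((s : ℝ) + ab.2 - 1) ab.2)
            * ((1 - q) ^ κ * (1 - q) ^ s * q ^ (m - s)) := by
        intro ab hab
        have h := HasAntidiagonal.mem_antidiagonal.mp hab
        rw [polyaMass, nbAux, ← h, pow_add]
        ring
      rw [sum_congr rfl h1, ← sum_mul, gbc_vand]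
      have h2 : κ + (s : ℝ) + ((m - s : ℕ) : ℝ) - 1 = κ + (m : ℝ) - 1 := by
        rw [Nat.cast_sub hs]; ring
      rw [h2]
      ring
    · rfl
  have outer : ∀ s ∈ range (n + 1),
      (∑ ij ∈ antidiagonal m,
          (n.choose s : ℝ) * p ^ (n - s) * (1 - p) ^ s * (polyaMass κ q ij.1 * nb q s ij.2))
        = (n.choose s : ℝ) * p ^ (n - s) * (1 - p) ^ s
          * (if s ≤ m then
              gbc (κ + m - 1) (m - s) * (1 - q) ^ κ * (1 - q) ^ s * q ^ (m - s) else 0) :=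
    fun s _ => by rw [← mul_sum, polyaConv]
  rw [sum_congr rfl outer]
  rw [← Finset.sum_subset (Finset.range_subset_range.mpr (by omega : min n m + 1 ≤ n + 1)) ?_]
  · refine sum_congr rfl fun s hs => ?_
    have hsm : s ≤ m := by
      have := mem_range.mp hs; omega
    rw [if_pos hsm]
    rw [Real.rpow_add hq κ (s : ℝ), Real.rpow_natCast]
    ring
  · intro s hs hns
    have h1 := mem_range.mp hs
    have h3 : ¬ s < min n m + 1 := fun h => hns (mem_range.mpr h)
    have h2 : ¬ s ≤ m := by omega
    rw [if_neg h2, mul_zero]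
end

section
/- (Binomial thinning of a Pólya distribution) Let ξ - s given η = s have a Pólya distribution with parameters (κ + s, q), and let ξ̃ given ξ = n be Binomial(n, 1-ε). Then ξ̃ - s given η = s has a Pólya distribution with parameters (κ + s, q̃) where q̃ = q(1-ε)/(1-qε). Explicitly: ∑_{n≥ℓ} C(κ+n-1, n-s)(1-q)^{κ+s} q^{n-s} · C(n-s, ℓ-s)(1-ε)^{ℓ-s} ε^{n-ℓ} = C(κ+ℓ-1, ℓ-s)(1-q̃)^{κ+s} q̃^{ℓ-s}, where additionally (1-q̃)^{κ+s} must be interpreted as ((1-q)/(1-qε))^{κ+s}. -/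
namespace Stmt5Aux

open Finset Filter Metric

noncomputable def aa (θ : ℝ) (m : ℕ) : ℝ :=
  (∏ i ∈ Finset.range m, (θ + i)) / (Nat.factorial m)

lemma aa_zero (θ : ℝ) : aa θ 0 = 1 := by simp [aa]

lemma aa_succ (θ : ℝ) (m : ℕ) : ((m : ℝ) + 1) * aa θ (m + 1) = (θ + m) * aa θ m := by
  have h1 : (Nat.factorial m : ℝ) ≠ 0 := by exact_mod_cast (Nat.factorial_pos m).ne'
  have h2 : ((m : ℝ) + 1) ≠ 0 := by positivity
  simp only [aa, Finset.prod_range_succ, Nat.factorial_succ]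
  push_cast
  field_simp

lemma aa_pos {θ : ℝ} (hθ : 0 < θ) (m : ℕ) : 0 < aa θ m := by
  apply div_pos
  · exact Finset.prod_pos (fun i _ => by positivity)
  · exact_mod_cast Nat.factorial_pos m

/-- The binomial series: `∑ aa θ m x^m = (1-x)^(-θ)` for `0 ≤ x < 1`, `θ > 0`. -/
lemma tsum_aa {θ : ℝ} (hθ : 0 < θ) {x : ℝ} (hx0 : 0 ≤ x) (hx1 : x < 1) :
    ∑' m : ℕ, aa θ m * x ^ m = (1 - x) ^ (-θ) := by
  set ρ : ℝ := (1 + x) / 2 with hρdef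
  have hρ0 : 0 < ρ := by positivity
  have hρ1 : ρ < 1 := by simp only [hρdef]; linarith
  have hxρ : x < ρ := by simp only [hρdef]; linarith
  set t : Set ℝ := Metric.ball (0 : ℝ) ρ with htdef
  have ht : IsOpen t := Metric.isOpen_ball
  have h't : IsPreconnected t := (convex_ball (0:ℝ) ρ).isPreconnected
  set g : ℕ → ℝ → ℝ := fun m y => aa θ m * y ^ m with hgdef
  set g' : ℕ → ℝ → ℝ := fun m y => aa θ m * (m * y ^ (m - 1)) with hg'def
  set u : ℕ → ℝ := fun m => aa θ m * (m * ρ ^ (m - 1)) with hudef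
  have hder : ∀ m y, HasDerivAt (g m) (g' m y) y :=
    fun m y => (hasDerivAt_pow m y).const_mul (aa θ m)
  have hbound : ∀ m y, y ∈ t → ‖g' m y‖ ≤ u m := by
    intro m y hy
    have hya : |y| < ρ := by simpa [htdef, Real.norm_eq_abs] using hy
    have h1 : |y| ^ (m - 1) ≤ ρ ^ (m - 1) := pow_le_pow_left₀ (abs_nonneg y) hya.le _
    have h2 : (0:ℝ) < aa θ m := aa_pos hθ m
    simp only [hg'def, hudef, Real.norm_eq_abs, abs_mul, abs_of_pos h2,
      Nat.abs_cast, abs_pow]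
    gcongr
  -- summability of the bound via ratio test
  have hu : Summable u := by
    set r : ℝ := (1 + ρ) / 2 with hrdef
    have hr1 : r < 1 := by simp only [hrdef]; linarith
    have hρr : ρ < r := by simp only [hrdef]; linarith
    refine summable_of_ratio_norm_eventually_le hr1 ?_
    have hN : ∀ᶠ n : ℕ in Filter.atTop, ρ * θ ≤ (r - ρ) * n ∧ 1 ≤ n := by
      filter_upwards [Filter.eventually_ge_atTop (⌈ρ * θ / (r - ρ)⌉₊ + 1)] with n hn
      constructor
      · have h1 : ρ * θ / (r - ρ) ≤ (⌈ρ * θ / (r - ρ)⌉₊ : ℝ) := Nat.le_ceil _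
        have h2 : ((⌈ρ * θ / (r - ρ)⌉₊ : ℕ) : ℝ) ≤ (n : ℝ) := by exact_mod_cast by omega
        have h3 : ρ * θ / (r - ρ) ≤ (n : ℝ) := le_trans h1 h2
        have h4 : 0 < r - ρ := by linarith
        calc ρ * θ = (ρ * θ / (r - ρ)) * (r - ρ) := by field_simp
          _ ≤ (n : ℝ) * (r - ρ) := by gcongr
          _ = (r - ρ) * n := by ring
      · omega
    filter_upwards [hN] with n hnn
    obtain ⟨hn, hn1⟩ := hnn
    obtain ⟨k, rfl⟩ : ∃ k, n = k + 1 := ⟨n - 1, by omega⟩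
    have hk : (0:ℝ) ≤ (k:ℝ) := Nat.cast_nonneg k
    have hkey : (θ + ((k:ℝ) + 1)) * ρ ≤ r * ((k:ℝ) + 1) := by
      push_cast at hn; nlinarith
    have hpos1 : (0:ℝ) < aa θ (k+1) := aa_pos hθ _
    have hpos2 : (0:ℝ) < aa θ (k+2) := aa_pos hθ _
    have hupos : ∀ m, 0 ≤ u m := by
      intro m
      have := aa_pos hθ m
      simp only [hudef]
      positivity
    rw [Real.norm_eq_abs, Real.norm_eq_abs, abs_of_nonneg (hupos _), abs_of_nonneg (hupos _)]
    have e1 : u (k + 1 + 1) = aa θ (k + 2) * ((((k:ℝ)) + 2) * ρ ^ (k+1)) := by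
      simp only [hudef, Nat.add_sub_cancel]
      push_cast; ring
    have e2 : u (k + 1) = aa θ (k + 1) * ((((k:ℝ)) + 1) * ρ ^ k) := by
      simp only [hudef, Nat.add_sub_cancel]
      push_cast; ring
    rw [e1, e2]
    have haa : ((k:ℝ) + 1 + 1) * aa θ (k + 2) = (θ + ((k:ℝ)+1)) * aa θ (k+1) := by
      have := aa_succ θ (k+1); push_cast at this ⊢; linarith
    have e3 : aa θ (k + 2) * (((k:ℝ) + 2) * ρ ^ (k+1))
        = ((θ + ((k:ℝ)+1)) * ρ) * (aa θ (k+1) * ρ ^ k) := by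
      rw [pow_succ]
      linear_combination (ρ ^ k * ρ) * haa
    rw [e3]
    calc ((θ + ((k:ℝ)+1)) * ρ) * (aa θ (k+1) * ρ ^ k)
        ≤ (r * ((k:ℝ)+1)) * (aa θ (k+1) * ρ ^ k) := by
          apply mul_le_mul_of_nonneg_right hkey; positivity
      _ = r * (aa θ (k + 1) * (((k:ℝ) + 1) * ρ ^ k)) := by ring
  -- summability at 0
  have h0t : (0:ℝ) ∈ t := Metric.mem_ball_self hρ0
  have hg0 : Summable (fun m => g m 0) := by
    apply summable_of_ne_finset_zero (s := {0})
    intro m hm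
    simp only [Finset.mem_singleton] at hm
    simp [hgdef, zero_pow hm]
  have hgsum : ∀ y ∈ t, Summable (fun m => g m y) := fun y hy =>
    summable_of_summable_hasDerivAt_of_isPreconnected hu ht h't
      (fun n y _ => hder n y) hbound h0t hg0 hy
  have hFder : ∀ y ∈ t, HasDerivAt (fun z => ∑' m, g m z) (∑' m, g' m y) y := fun y hy =>
    hasDerivAt_tsum_of_isPreconnected hu ht h't (fun n y _ => hder n y) hbound h0t hg0 hy
  -- the ODE
  have hode : ∀ y ∈ t, (1 - y) * (∑' m, g' m y) = θ * ∑' m, g m y := by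
    intro y hy
    have hS' : Summable (fun m => g' m y) :=
      Summable.of_norm_bounded hu (fun m => hbound m y hy)
    have hS : Summable (fun m => g m y) := hgsum y hy
    have hshift : (∑' m, g' m y) = ∑' m, g' (m + 1) y := by
      rw [Summable.tsum_eq_zero_add hS']
      simp [hg'def]
    have hpt : ∀ m : ℕ, g' (m + 1) y = θ * g m y + y * g' m y := by
      intro m
      cases m with
      | zero =>
        have h0 : aa θ 1 = θ := by
          have := aa_succ θ 0; simpa [aa_zero] using this
        simp [hgdef, hg'def, h0, aa_zero]
      | succ n =>
        simp only [hgdef, hg'def]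
        have e : (n + 1 + 1 : ℕ) - 1 = n + 1 := rfl
        have e2 : (n + 1 : ℕ) - 1 = n := rfl
        rw [e, e2]
        have h1 : ((n:ℝ) + 1 + 1) * aa θ (n + 2) = (θ + ((n:ℝ) + 1)) * aa θ (n + 1) := by
          have := aa_succ θ (n + 1); push_cast at this ⊢; linarith
        have h2 : ((n:ℝ) + 1 + 1) ≠ 0 := by positivity
        have h3 : aa θ (n + 2) = (θ + ((n:ℝ)+1)) * aa θ (n+1) / ((n:ℝ) + 1 + 1) := by
          field_simp
          linarith
        push_cast
        rw [show (n:ℝ) + 1 + 1 = ((n:ℝ) + 1 + 1) from rfl] at h3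
        rw [h3, pow_succ]
        field_simp
    have heq : (∑' m, g' m y) = θ * (∑' m, g m y) + y * (∑' m, g' m y) := by
      calc (∑' m, g' m y) = ∑' m, g' (m + 1) y := hshift
        _ = ∑' m, (θ * g m y + y * g' m y) := tsum_congr hpt
        _ = (∑' m, θ * g m y) + ∑' m, y * g' m y :=
            Summable.tsum_add (hS.mul_left θ) (hS'.mul_left y)
        _ = θ * (∑' m, g m y) + y * (∑' m, g' m y) := by rw [tsum_mul_left, tsum_mul_left]
    linear_combination heq
  -- the function G = F * (1-·)^θ has zero derivative on t
  have hG : ∀ y ∈ t, HasDerivAt (fun z => (∑' m, g m z) * (1 - z) ^ θ) 0 y := by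
    intro y hy
    have hya : |y| < ρ := by simpa [htdef, Real.norm_eq_abs] using hy
    have h1y : (0:ℝ) < 1 - y := by
      have : y < ρ := lt_of_le_of_lt (le_abs_self y) hya
      linarith
    have hin : HasDerivAt (fun z : ℝ => 1 - z) (-1) y := by
      simpa using (hasDerivAt_id y).const_sub 1
    have hout := Real.hasDerivAt_rpow_const (x := 1 - y) (p := θ) (Or.inl (ne_of_gt h1y))
    have h2 : HasDerivAt (fun z : ℝ => (1 - z) ^ θ) (θ * (1 - y) ^ (θ - 1) * (-1)) y :=
      hout.comp y hin
    have total := (hFder y hy).mul h2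
    have hsplit : (1 - y) ^ θ = (1 - y) ^ (θ - 1) * (1 - y) := by
      have h := Real.rpow_add h1y (θ - 1) 1
      rw [Real.rpow_one] at h
      rw [show θ - 1 + 1 = θ by ring] at h
      exact h
    have h0 : (∑' m, g' m y) * (1 - y) ^ θ
        + (∑' m, g m y) * (θ * (1 - y) ^ (θ - 1) * (-1)) = 0 := by
      rw [hsplit]
      linear_combination ((1 - y) ^ (θ - 1)) * (hode y hy)
    rw [← h0]
    exact total
  -- G constant on [0, x]
  have hsub : Set.Icc (0:ℝ) x ⊆ t := by
    intro y hy
    simp only [htdef, Metric.mem_ball, Real.dist_eq, sub_zero]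
    rw [abs_of_nonneg hy.1]
    exact lt_of_le_of_lt hy.2 hxρ
  have hconst : (∑' m, g m x) * (1 - x) ^ θ = (∑' m, g m 0) * (1 - 0) ^ θ := by
    have h := constant_of_has_deriv_right_zero
      (f := fun z => (∑' m, g m z) * (1 - z) ^ θ) (a := 0) (b := x)
      (fun y hy => ((hG y (hsub hy)).continuousAt).continuousWithinAt)
      (fun y hy => ((hG y (hsub ⟨hy.1, hy.2.le⟩)).hasDerivWithinAt))
    exact h x (Set.right_mem_Icc.mpr hx0)
  have hF0 : (∑' m, g m 0) = 1 := by
    have h := tsum_eq_single (L := SummationFilter.unconditional ℕ) (f := fun m => g m 0) 0 (fun m hm => by simp [hgdef, zero_pow hm])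
    rw [h]
    simp [hgdef, aa_zero]
  rw [hF0] at hconst
  simp only [sub_zero, Real.one_rpow, one_mul, mul_one] at hconst
  have h1x : (0:ℝ) < 1 - x := by linarith
  have hpow : (0:ℝ) < (1 - x) ^ θ := Real.rpow_pos_of_pos h1x θ
  have hFx : (∑' m, g m x) = ((1 - x) ^ θ)⁻¹ := by
    field_simp
    linarith [hconst]
  rw [Real.rpow_neg h1x.le]
  exact hFx

end Stmt5Aux


namespace Stmt5Aux

lemma gbc_eq_aa (θ : ℝ) (m : ℕ) : gbc (θ + m - 1) m = aa θ m := by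
  unfold gbc aa
  congr 1
  rw [← Finset.prod_range_reflect (fun i => θ + (i : ℝ)) m]
  refine Finset.prod_congr rfl (fun i hi => ?_)
  simp only [Finset.mem_range] at hi
  have h1 : (1 : ℕ) ≤ m := by omega
  have h2 : i ≤ m - 1 := by omega
  rw [Nat.cast_sub h2, Nat.cast_sub h1]
  push_cast
  ring

lemma gbc_split (A : ℝ) (m k : ℕ) :
    gbc (A + m) (m + k) * ((m + k).choose k : ℝ) = gbc A k * gbc (A + m) m := by
  unfold gbc
  rw [Finset.prod_range_add]
  have h2 : (∏ i ∈ Finset.range k, (A + (m:ℝ) - ((m + i : ℕ) : ℝ)))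
      = ∏ i ∈ Finset.range k, (A - i) := by
    refine Finset.prod_congr rfl (fun i _ => ?_)
    push_cast; ring
  rw [h2]
  have hfac : ((m + k).choose k : ℝ) * (Nat.factorial k) * (Nat.factorial m)
      = ((m + k).factorial : ℝ) := by
    have := Nat.choose_mul_factorial_mul_factorial (Nat.le_add_left k m)
    have h3 : m + k - k = m := by omega
    rw [h3] at this
    exact_mod_cast this
  have hm : (Nat.factorial m : ℝ) ≠ 0 := by exact_mod_cast (Nat.factorial_pos m).ne'
  have hk : (Nat.factorial k : ℝ) ≠ 0 := by exact_mod_cast (Nat.factorial_pos k).ne'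
  have hmk : (Nat.factorial (m + k) : ℝ) ≠ 0 := by exact_mod_cast (Nat.factorial_pos _).ne'
  field_simp
  linear_combination (∏ i ∈ Finset.range m, (A + (m:ℝ) - (i:ℝ))) *
    (∏ i ∈ Finset.range k, (A - (i:ℝ))) * hfac

end Stmt5Aux

/-- binomial thinning of a Pólya distribution: if `ξ - s`
given `η = s` is Pólya`(κ+s, q)` and each of the `ξ - s` extra copies is
independently retained with probability `1-ε`, then the retained count
`ξ̃ - s` is Pólya`(κ+s, q̃)` with `q̃ = q(1-ε)/(1-qε)` and
`(1-q̃) = (1-q)/(1-qε)`. -/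
theorem stmt5 (κ q ε : ℝ) (hκ : 0 < κ) (hq0 : 0 < q) (hq1 : q < 1)
    (hε0 : 0 ≤ ε) (hε1 : ε < 1) (s ℓ : ℕ) (hsl : s ≤ ℓ) :
    ∑' n : ℕ,
        (if ℓ ≤ n then
          gbc (κ + n - 1) (n - s) * (1 - q) ^ (κ + s) * q ^ (n - s) *
            (Nat.choose (n - s) (ℓ - s)) * (1 - ε) ^ (ℓ - s) * ε ^ (n - ℓ)
        else 0)
      = gbc (κ + ℓ - 1) (ℓ - s) * ((1 - q) / (1 - q * ε)) ^ (κ + s) *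
          (q * (1 - ε) / (1 - q * ε)) ^ (ℓ - s) := by
  classical
  open Stmt5Aux in
  set k := ℓ - s with hkdef
  set f : ℕ → ℝ := fun n =>
    (if ℓ ≤ n then
      gbc (κ + n - 1) (n - s) * (1 - q) ^ (κ + s) * q ^ (n - s) *
        (Nat.choose (n - s) (ℓ - s)) * (1 - ε) ^ (ℓ - s) * ε ^ (n - ℓ)
    else 0) with hfdef
  -- reindex by n = m + ℓ
  have hinj : Function.Injective (fun m : ℕ => m + ℓ) := fun a b h => by
    simp only at h; omega
  have hsupp : Function.support f ⊆ Set.range (fun m : ℕ => m + ℓ) := by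
    intro n hn
    by_contra hc
    have hlt : n < ℓ := by
      by_contra hge
      exact hc ⟨n - ℓ, by simp only []; omega⟩
    apply hn
    simp [hfdef, Nat.not_le.mpr hlt]
  rw [← Function.Injective.tsum_eq hinj hsupp]
  -- rewrite each term
  have hqe1 : q * ε < 1 := by nlinarith
  have hqe0 : 0 ≤ q * ε := by positivity
  have hterm : ∀ m : ℕ, f (m + ℓ) =
      (gbc (κ + ℓ - 1) k * (1 - q) ^ (κ + s) * q ^ k * (1 - ε) ^ k) *
        (aa (κ + ℓ) m * (q * ε) ^ m) := by
    intro m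
    have hle : ℓ ≤ m + ℓ := Nat.le_add_left ℓ m
    have e1 : (m + ℓ) - s = m + k := by omega
    have e2 : (m + ℓ) - ℓ = m := by omega
    have e3 : κ + ((m + ℓ : ℕ) : ℝ) - 1 = (κ + (ℓ:ℝ) - 1) + (m : ℕ) := by push_cast; ring
    simp only [hfdef, if_pos hle, e1, e2, e3, ← hkdef]
    have hsplit := gbc_split (κ + (ℓ:ℝ) - 1) m k
    have haa : gbc ((κ + (ℓ:ℝ) - 1) + m) m = aa (κ + ℓ) m := by
      have : (κ + (ℓ:ℝ) - 1) + m = (κ + ℓ) + (m:ℝ) - 1 := by ring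
      rw [this]
      exact gbc_eq_aa (κ + ℓ) m
    rw [haa] at hsplit
    calc gbc ((κ + (ℓ:ℝ) - 1) + m) (m + k) * (1 - q) ^ (κ + s) * q ^ (m + k) *
          ((m + k).choose k : ℝ) * (1 - ε) ^ k * ε ^ m
        = (gbc ((κ + (ℓ:ℝ) - 1) + m) (m + k) * ((m + k).choose k : ℝ)) *
            ((1 - q) ^ (κ + s) * q ^ (m + k) * (1 - ε) ^ k * ε ^ m) := by ring
      _ = (gbc (κ + (ℓ:ℝ) - 1) k * aa (κ + ℓ) m) *
            ((1 - q) ^ (κ + s) * (q ^ m * q ^ k) * (1 - ε) ^ k * ε ^ m) := by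
          rw [hsplit, pow_add]
      _ = (gbc (κ + (ℓ:ℝ) - 1) k * (1 - q) ^ (κ + s) * q ^ k * (1 - ε) ^ k) *
            (aa (κ + ℓ) m * (q * ε) ^ m) := by
          rw [mul_pow]; ring
  rw [tsum_congr hterm, tsum_mul_left]
  have hθ : (0:ℝ) < κ + ℓ := by positivity
  rw [Stmt5Aux.tsum_aa hθ hqe0 hqe1]
  -- final rpow algebra
  have hP : (0:ℝ) < 1 - q * ε := by linarith
  have hq' : (0:ℝ) < 1 - q := by linarith
  have hcast : κ + (ℓ:ℝ) = (κ + s) + (k:ℝ) := by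
    have : (k:ℝ) = (ℓ:ℝ) - (s:ℝ) := by
      rw [hkdef, Nat.cast_sub hsl]
    rw [this]; ring
  rw [show -(κ + (ℓ:ℝ)) = -((κ + s) + (k:ℝ)) by rw [hcast]]
  rw [Real.rpow_neg hP.le, Real.rpow_add hP, Real.rpow_natCast]
  rw [Real.div_rpow hq'.le hP.le, div_pow, mul_pow]
  have h1 : (1 - q * ε) ^ (κ + (s:ℝ)) ≠ 0 := (Real.rpow_pos_of_pos hP _).ne'
  have h2 : ((1 - q * ε) ^ k : ℝ) ≠ 0 := (pow_pos hP k).ne'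
  field_simp
end

section
/- (Unicity of survival parameters) Let 0 < p̃, q̃ < 1 and 0 ≤ ε < 1 with ε(1-q̃) < 1. The system q̃ = q(1-ε)/(1-qε), p̃ = p + (1-p)ε(1-q̃) has a unique solution q = q̃/(q̃ + (1-q̃)(1-ε)) ∈ (0,1) and p = (p̃ - ε(1-q̃))/(1 - ε(1-q̃)) < 1; moreover p > 0 if and only if p̃ > ε(1-q̃). -/
/-- unicity of survival parameters: for `0 < p̃, q̃ < 1` and
`0 ≤ ε < 1` with `ε(1-q̃) < 1`, the system
`q̃ = q(1-ε)/(1-qε)`, `p̃ = p + (1-p)ε(1-q̃)` has the unique solution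
`q = q̃/(q̃ + (1-q̃)(1-ε)) ∈ (0,1)` and
`p = (p̃ - ε(1-q̃))/(1 - ε(1-q̃)) < 1`, with `p > 0 ↔ p̃ > ε(1-q̃)`. -/
theorem stmt13 (pt qt ε : ℝ) (hp0 : 0 < pt) (hp1 : pt < 1) (hq0 : 0 < qt)
    (hq1 : qt < 1) (hε0 : 0 ≤ ε) (hε1 : ε < 1) (hεq : ε * (1 - qt) < 1) :
    let q : ℝ := qt / (qt + (1 - qt) * (1 - ε))
    let p : ℝ := (pt - ε * (1 - qt)) / (1 - ε * (1 - qt))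
    (0 < q ∧ q < 1) ∧ p < 1 ∧
    qt = q * (1 - ε) / (1 - q * ε) ∧
    pt = p + (1 - p) * ε * (1 - qt) ∧
    (0 < p ↔ ε * (1 - qt) < pt) ∧
    (∀ q' p' : ℝ, 0 < q' → q' < 1 →
      qt = q' * (1 - ε) / (1 - q' * ε) →
      pt = p' + (1 - p') * ε * (1 - qt) →
      q' = q ∧ p' = p) := by
  intro q p
  have hD : (0:ℝ) < qt + (1 - qt) * (1 - ε) := by nlinarith
  have hDeq : qt + (1 - qt) * (1 - ε) = 1 - ε * (1 - qt) := by ring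
  have hD' : (0:ℝ) < 1 - ε * (1 - qt) := hDeq ▸ hD
  have hq : q = qt / (qt + (1 - qt) * (1 - ε)) := rfl
  have hp : p = (pt - ε * (1 - qt)) / (1 - ε * (1 - qt)) := rfl
  have hqpos : 0 < q := div_pos hq0 hD
  have hqlt : q < 1 := by
    rw [hq, div_lt_one hD]; nlinarith
  have hplt : p < 1 := by
    rw [hp, div_lt_one hD']; nlinarith
  have hden : 1 - q * ε ≠ 0 := by
    have : 0 < 1 - q * ε := by nlinarith
    linarith
  refine ⟨⟨hqpos, hqlt⟩, hplt, ?_, ?_, ?_, ?_⟩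
  · rw [eq_div_iff hden, hq]
    field_simp
    ring
  · rw [hp]
    field_simp
    ring
  · rw [hp, div_pos_iff]
    constructor
    · rintro (⟨h1, _⟩ | ⟨_, h2⟩) <;> linarith
    · intro h; left; constructor <;> linarith
  · intro q' p' hq'0 hq'1 hqt hpt
    have hden' : (0:ℝ) < 1 - q' * ε := by nlinarith
    have h1 : qt * (1 - q' * ε) = q' * (1 - ε) := by
      field_simp at hqt; linarith [hqt]
    have hq'eq : q' = q := by
      rw [hq, eq_div_iff (ne_of_gt hD)]
      nlinarith
    have hp'eq : p' = p := by
      rw [hp, eq_div_iff (ne_of_gt hD')]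
      nlinarith
    exact ⟨hq'eq, hp'eq⟩
end
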